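/- Let p be a prime number, R = ℤ[1/p] the subring of ℚ generated by 1/p, m a positive integer coprime to p, and I = mR. Assume the following (which holds under the Generalized Riemann Hypothesis): for all coprime integers c, d with p not dividing d, there exist infinitely many primes q with q ≡ c (mod d) such that p is a primitive root modulo q (i.e. p generates the multiplicative group (ℤ/qℤ)ˣ). Then every matrix g ∈ SL(2,R) with g ≡ 1₂ (mod I) is a product of at most 6 elements of the set {1₂ + sE₁₂ : s ∈ I} ∪ {1₂ + sE₂₁ : s ∈ I} ∪ {(1₂ + ξE₁₂)⁻¹ · (1₂ + sE₂₁) · (1₂ + ξE₁₂) : s ∈ I, ξ ∈ R}. (Lemma on the width of SL(2, ℤ[1/p], I) with respect to the Tits generators Z({−α₁}).) -/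

import Mathlib

/-!
Clear the first column `(a, c)` of `g` by alternately adding `R`-multiples of `c` to `a` and
`I`-multiples of `a` to `c`. Write `a = A·pᵘ` and `c = m·C·pᵛ` with `p ∤ A`. Adding a multiple of
`a` turns `C` into a prime `q₁ ≡ C (mod A)`; adding a multiple of `c` turns `A` into a prime
`q₂ ≡ A (mod m q₁)` having `p` as a primitive root; since `pᵂ ≡ q₁ (mod q₂)` for some `W`, `c`
then becomes `m` times a unit, and the remaining two operations reach `(1, 0)`, as `a ≡ 1 (mod m)`
throughout. A matrix of determinant one with first column `(1, 0)` is upper unitriangular, so `g`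
is a word `U L U L U L U` in elementary matrices whose lower entries lie in `I`; conjugating each
lower factor by the product of the upper factors before it leaves three generators of the third
kind and one upper unitriangular matrix, whose entry lies in `I` because `g ≡ 1 (mod I)`.
-/

open Matrix

/-- `ℤ[1/p]`, the subring of `ℚ` generated by `1/p`. -/
def ZinvP (p : ℕ) : Subring ℚ := Subring.closure {1 / (p : ℚ)}

namespace Matrix

variable {n R S : Type*} [Fintype n] [DecidableEq n] [CommRing R] [CommRing S]

theorem inv_transvection {i j : n} (h : i ≠ j) (c : R) :
    (transvection i j c)⁻¹ = transvection i j (-c) :=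
  inv_eq_left_inv <| by
    rw [transvection_mul_transvection_same _ _ h, neg_add_cancel, transvection_zero]

theorem transvection_mul_transvection_mul {i j : n} (h : i ≠ j) (c d : R) (M : Matrix n n R) :
    transvection i j c * (transvection i j d * M) = transvection i j (c + d) * M := by
  rw [← Matrix.mul_assoc, transvection_mul_transvection_same _ _ h]

theorem _root_.RingHom.mapMatrix_transvection (f : R →+* S) (i j : n) (c : R) :
    f.mapMatrix (transvection i j c) = transvection i j (f c) := by
  simp [transvection, Matrix.map_add, Matrix.map_one, Matrix.map_single]

theorem transvection_zero_one_mulVec (t a c : R) :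
    transvection (0 : Fin 2) 1 t *ᵥ ![a, c] = ![a + t * c, c] := by
  ext i; fin_cases i <;> simp [transvection, mulVec, dotProduct]

theorem transvection_one_zero_mulVec (s a c : R) :
    transvection (1 : Fin 2) 0 s *ᵥ ![a, c] = ![a, c + s * a] := by
  ext i; fin_cases i <;> simp [transvection, mulVec, dotProduct, add_comm]

theorem eq_transvection_of_det_eq_one_of_mulVec (M : Matrix (Fin 2) (Fin 2) R) (hdet : M.det = 1)
    (hM : M *ᵥ ![1, 0] = ![1, 0]) : M = transvection 0 1 (M 0 1) := by
  have h₀₀ : M 0 0 = 1 := by simpa [mulVec, dotProduct] using congrFun hM 0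
  have h₁₀ : M 1 0 = 0 := by simpa [mulVec, dotProduct] using congrFun hM 1
  rw [det_fin_two, h₀₀, h₁₀] at hdet
  ext i j; fin_cases i <;> fin_cases j <;> simp [transvection, h₀₀, h₁₀]
  linear_combination hdet

end Matrix

section TitsGenerators

variable {R : Type*} [CommRing R]

/-- Membership in the paper's generating set `Z({−α₁})` of `SL(2, R, I)`. -/
def IsTitsGenerator (I : Ideal R) (x : Matrix (Fin 2) (Fin 2) R) : Prop :=
  (∃ s ∈ I, x = transvection 0 1 s) ∨ (∃ s ∈ I, x = transvection 1 0 s) ∨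
    ∃ s ∈ I, ∃ ξ : R, x = (transvection 0 1 ξ)⁻¹ * transvection 1 0 s * transvection 0 1 ξ

theorem exists_list_isTitsGenerator_of_eq_word {I : Ideal R} {g : Matrix (Fin 2) (Fin 2) R}
    (hg : ∀ i j, g i j - (1 : Matrix (Fin 2) (Fin 2) R) i j ∈ I) {σ₁ σ₂ σ₃ : R}
    (hσ₁ : σ₁ ∈ I) (hσ₂ : σ₂ ∈ I) (hσ₃ : σ₃ ∈ I) (α₀ α₁ α₂ α₃ : R)
    (hw : g = transvection 0 1 α₀ * transvection 1 0 σ₁ * transvection 0 1 α₁ *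
      transvection 1 0 σ₂ * transvection 0 1 α₂ * transvection 1 0 σ₃ * transvection 0 1 α₃) :
    ∃ L : List (Matrix (Fin 2) (Fin 2) R), L.length = 4 ∧ (∀ x ∈ L, IsTitsGenerator I x) ∧
      g = L.prod := by
  -- With `βₖ = α₀ + ⋯ + αₖ₋₁`, the word is `∏ₖ U(βₖ) L(σₖ) U(-βₖ) · U(β₄)`; modulo `I` it reads
  -- `1 = U(β₄)`.
  have hsum : α₀ + α₁ + α₂ + α₃ ∈ I := by
    have hg₁ : (Ideal.Quotient.mk I).mapMatrix g = 1 := by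
      rw [← map_one (Ideal.Quotient.mk I).mapMatrix]
      ext i j
      exact (Ideal.Quotient.mk_eq_mk_iff_sub_mem _ _).mpr (hg i j)
    have h := congrArg (Ideal.Quotient.mk I).mapMatrix hw
    rw [hg₁] at h
    simp only [map_mul, RingHom.mapMatrix_transvection, Ideal.Quotient.eq_zero_iff_mem.mpr hσ₁,
      Ideal.Quotient.eq_zero_iff_mem.mpr hσ₂, Ideal.Quotient.eq_zero_iff_mem.mpr hσ₃,
      transvection_zero, mul_one, transvection_mul_transvection_same _ _ zero_ne_one] at h
    rw [← Ideal.Quotient.eq_zero_iff_mem, map_add, map_add, map_add]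
    simpa [transvection] using (congrFun (congrFun h 0) 1).symm
  refine ⟨[(transvection 0 1 (-α₀))⁻¹ * transvection 1 0 σ₁ * transvection 0 1 (-α₀),
    (transvection 0 1 (-(α₀ + α₁)))⁻¹ * transvection 1 0 σ₂ * transvection 0 1 (-(α₀ + α₁)),
    (transvection 0 1 (-(α₀ + α₁ + α₂)))⁻¹ * transvection 1 0 σ₃ *
      transvection 0 1 (-(α₀ + α₁ + α₂)),
    transvection 0 1 (α₀ + α₁ + α₂ + α₃)], rfl, ?_, ?_⟩
  · simp only [List.mem_cons, List.not_mem_nil, or_false]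
    rintro x (rfl | rfl | rfl | rfl)
    exacts [.inr (.inr ⟨σ₁, hσ₁, _, rfl⟩), .inr (.inr ⟨σ₂, hσ₂, _, rfl⟩),
      .inr (.inr ⟨σ₃, hσ₃, _, rfl⟩), .inl ⟨_, hsum, rfl⟩]
  · simp only [hw, List.prod_cons, List.prod_nil, mul_one, inv_transvection zero_ne_one, neg_neg,
      Matrix.mul_assoc, transvection_mul_transvection_mul zero_ne_one,
      transvection_mul_transvection_same _ _ zero_ne_one, neg_add_cancel_left]

end TitsGenerators

section ColumnReduction

variable {R : Type*} [CommRing R]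

def ColumnReducible (I : Ideal R) (v : Fin 2 → R) : Prop :=
  ∃ t₀ t₁ t₂ : R, ∃ s₁ ∈ I, ∃ s₂ ∈ I, ∃ s₃ ∈ I,
    transvection 1 0 s₃ *ᵥ (transvection 0 1 t₂ *ᵥ (transvection 1 0 s₂ *ᵥ
      (transvection 0 1 t₁ *ᵥ (transvection 1 0 s₁ *ᵥ (transvection 0 1 t₀ *ᵥ v))))) = ![1, 0]

theorem ColumnReducible.of_transvection_mulVec {I : Ideal R} {v : Fin 2 → R} {t : R}
    (h : ColumnReducible I (transvection 0 1 t *ᵥ v)) : ColumnReducible I v := by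
  obtain ⟨t₀, t₁, t₂, s₁, hs₁, s₂, hs₂, s₃, hs₃, h⟩ := h
  refine ⟨t₀ + t, t₁, t₂, s₁, hs₁, s₂, hs₂, s₃, hs₃, ?_⟩
  rwa [← transvection_mul_transvection_same _ _ zero_ne_one, ← mulVec_mulVec]

theorem exists_list_isTitsGenerator_of_columnReducible {I : Ideal R}
    {g : Matrix (Fin 2) (Fin 2) R} (hdet : g.det = 1)
    (hg : ∀ i j, g i j - (1 : Matrix (Fin 2) (Fin 2) R) i j ∈ I)
    (hred : ColumnReducible I ![g 0 0, g 1 0]) :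
    ∃ L : List (Matrix (Fin 2) (Fin 2) R), L.length = 4 ∧ (∀ x ∈ L, IsTitsGenerator I x) ∧
      g = L.prod := by
  obtain ⟨t₀, t₁, t₂, s₁, hs₁, s₂, hs₂, s₃, hs₃, hred⟩ := hred
  set M := transvection 1 0 s₃ * transvection 0 1 t₂ * transvection 1 0 s₂ *
    transvection 0 1 t₁ * transvection 1 0 s₁ * transvection 0 1 t₀ * g with hM
  have hMcol : M *ᵥ ![1, 0] = ![1, 0] := by
    have hgcol : g *ᵥ ![1, 0] = ![g 0 0, g 1 0] := by
      ext i; fin_cases i <;> simp [mulVec, dotProduct]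
    simp only [hM, ← mulVec_mulVec, hgcol, hred]
  have hMdet : M.det = 1 := by simp [hM, hdet]
  refine exists_list_isTitsGenerator_of_eq_word hg (neg_mem hs₁) (neg_mem hs₂) (neg_mem hs₃)
    (-t₀) (-t₁) (-t₂) (M 0 1) ?_
  rw [← eq_transvection_of_det_eq_one_of_mulVec M hMdet hMcol, hM]
  simp only [Matrix.mul_assoc, transvection_mul_transvection_mul zero_ne_one,
    transvection_mul_transvection_mul one_ne_zero, neg_add_cancel, transvection_zero,
    Matrix.one_mul]

theorem exists_add_mul_eq_of_dvd {x x' y : R} (ε δ : Rˣ) (h : y ∣ x' - x) :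
    ∃ r, x * ε + r * (y * δ) = x' * ε := by
  obtain ⟨k, hk⟩ := h
  exact ⟨k * ε * δ⁻¹, by linear_combination -(ε : R) * hk + k * ε * y * δ.inv_mul⟩

theorem exists_mem_span_add_mul_eq_of_dvd (μ : R) {x x' y : R} (ε δ : Rˣ) (h : y ∣ x' - x) :
    ∃ s ∈ Ideal.span {μ}, μ * x * δ + s * (y * ε) = μ * x' * δ := by
  obtain ⟨r, hr⟩ := exists_add_mul_eq_of_dvd δ ε h
  exact ⟨μ * r, Ideal.mul_mem_right _ _ (Ideal.mem_span_singleton_self μ),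
    by linear_combination μ * hr⟩

theorem columnReducible_of_dvd_chain {μ A C q₁ q₂ P : R} (ε δ : Rˣ) (hP : IsUnit P)
    (hA : A * ε - 1 ∈ Ideal.span {μ}) (h₁ : A ∣ q₁ - C) (h₂ : μ * q₁ ∣ q₂ - A)
    (h₃ : q₂ ∣ P - q₁) : ColumnReducible (Ideal.span {μ}) ![A * ε, μ * C * δ] := by
  obtain ⟨s₁, hs₁, hc₁⟩ := exists_mem_span_add_mul_eq_of_dvd μ ε δ h₁
  obtain ⟨t₁, ha₂⟩ := exists_add_mul_eq_of_dvd ε δ h₂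
  obtain ⟨s₂, hs₂, hc₂⟩ := exists_mem_span_add_mul_eq_of_dvd μ ε δ h₃
  have ha₂₁ : q₂ * ε - 1 ∈ Ideal.span {μ} := by
    obtain ⟨k, hk⟩ := h₂
    rw [show q₂ * ε - 1 = (A * ε - 1) + μ * (q₁ * k * ε) by linear_combination (ε : R) * hk]
    exact add_mem hA (Ideal.mul_mem_right _ _ (Ideal.mem_span_singleton_self μ))
  obtain ⟨y, hy⟩ := Ideal.mem_span_singleton.mp ha₂₁
  obtain ⟨u, hu⟩ := (hP.mul (δ.isUnit)).exists_left_inv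
  refine ⟨0, t₁, -y * u, s₁, hs₁, s₂, hs₂, -(μ * P * δ), neg_mem
    (Ideal.mul_mem_right _ _ (Ideal.mul_mem_right _ _ (Ideal.mem_span_singleton_self μ))), ?_⟩
  have ha₃ : q₂ * ε + -y * u * (μ * P * δ) = 1 := by
    linear_combination hy - μ * y * hu
  simp only [transvection_zero, one_mulVec, transvection_one_zero_mulVec,
    transvection_zero_one_mulVec, hc₁, ha₂, hc₂, ha₃]
  simp

end ColumnReduction

def ArtinInProgressions (p : ℕ) : Prop :=
  ∀ c d : ℤ, IsCoprime c d → ¬ ((p : ℤ) ∣ d) →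
    { q : ℕ | q.Prime ∧ (q : ℤ) ≡ c [ZMOD d] ∧ orderOf ((p : ZMod q)) = q - 1 }.Infinite

theorem exists_pow_sub_dvd_of_orderOf_eq {p q : ℕ} (hq : q.Prime)
    (hord : orderOf (p : ZMod q) = q - 1) {x : ℤ} (hx : ¬ (q : ℤ) ∣ x) :
    ∃ W : ℕ, (q : ℤ) ∣ (p : ℤ) ^ W - x := by
  have : Fact q.Prime := ⟨hq⟩
  have : NeZero (q - 1) := ⟨by have := hq.two_le; omega⟩
  have hx₀ : (x : ZMod q) ≠ 0 := by rwa [Ne, ZMod.intCast_zmod_eq_zero_iff_dvd]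
  obtain ⟨W, -, hW⟩ := (hord ▸ IsPrimitiveRoot.orderOf (p : ZMod q)).eq_pow_of_pow_eq_one
    (ZMod.pow_card_sub_one_eq_one hx₀)
  refine ⟨W, (ZMod.intCast_zmod_eq_zero_iff_dvd _ q).mp ?_⟩
  push_cast
  rw [hW, sub_self]

theorem ArtinInProgressions.exists_dvd_chain {p m : ℕ} (hp : p.Prime)
    (hArtin : ArtinInProgressions p) (hmp : m.Coprime p) {A C : ℤ} (hA : A ≠ 0)
    (hpA : ¬ (p : ℤ) ∣ A) (hAC : IsCoprime A C) (hAm : IsCoprime A m) :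
    ∃ q₁ q₂ : ℤ, ∃ W : ℕ, A ∣ q₁ - C ∧ (m : ℤ) * q₁ ∣ q₂ - A ∧ q₂ ∣ (p : ℤ) ^ W - q₁ := by
  obtain ⟨q₁, ⟨hq₁, hq₁C, -⟩, hq₁gt⟩ :=
    (hArtin C A hAC.symm hpA).exists_gt (max p A.natAbs)
  have hAq₁ : IsCoprime A q₁ := by
    refine ((Nat.prime_iff_prime_int.mp hq₁).coprime_iff_not_dvd.mpr fun h => hA ?_).symm
    exact Int.eq_zero_of_dvd_of_natAbs_lt_natAbs h (by simp only [Int.natAbs_natCast]; omega)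
  have hpmq₁ : ¬ (p : ℤ) ∣ m * q₁ := by
    rw [(Nat.prime_iff_prime_int.mp hp).dvd_mul, Int.natCast_dvd_natCast, Int.natCast_dvd_natCast,
      Nat.prime_dvd_prime_iff_eq hp hq₁]
    exact not_or.mpr ⟨(Nat.Prime.coprime_iff_not_dvd hp).mp hmp.symm, by omega⟩
  obtain ⟨q₂, ⟨hq₂, hq₂A, hq₂ord⟩, hq₂gt⟩ :=
    (hArtin A (m * q₁) (hAm.mul_right hAq₁) hpmq₁).exists_gt q₁
  have hq₂q₁ : ¬ (q₂ : ℤ) ∣ q₁ := fun h => hq₁.ne_zero (by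
    exact_mod_cast Int.eq_zero_of_dvd_of_natAbs_lt_natAbs h (by simpa using hq₂gt))
  obtain ⟨W, hW⟩ := exists_pow_sub_dvd_of_orderOf_eq hq₂ hq₂ord hq₂q₁
  exact ⟨q₁, q₂, W, hq₁C.symm.dvd, hq₂A.symm.dvd, hW⟩

namespace ZinvP

variable {p : ℕ}

theorem mem_iff (hp : p ≠ 0) {x : ℚ} : x ∈ ZinvP p ↔ ∃ (n : ℤ) (k : ℕ), x = n / p ^ k := by
  have hp' : (p : ℚ) ≠ 0 := by exact_mod_cast hp
  constructor
  · intro hx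
    induction hx using Subring.closure_induction with
    | mem x hx => exact ⟨1, 1, by simp [Set.mem_singleton_iff.mp hx]⟩
    | zero => exact ⟨0, 0, by simp⟩
    | one => exact ⟨1, 0, by simp⟩
    | add x y _ _ hx hy =>
      obtain ⟨n₁, k₁, rfl⟩ := hx
      obtain ⟨n₂, k₂, rfl⟩ := hy
      exact ⟨n₁ * p ^ k₂ + n₂ * p ^ k₁, k₁ + k₂, by push_cast; field_simp; ring⟩
    | neg x _ hx =>
      obtain ⟨n, k, rfl⟩ := hx
      exact ⟨-n, k, by push_cast; ring⟩
    | mul x y _ _ hx hy =>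
      obtain ⟨n₁, k₁, rfl⟩ := hx
      obtain ⟨n₂, k₂, rfl⟩ := hy
      exact ⟨n₁ * n₂, k₁ + k₂, by push_cast; field_simp; ring⟩
  · rintro ⟨n, k, rfl⟩
    rw [div_eq_mul_one_div, ← _root_.one_div_pow]
    exact mul_mem (intCast_mem _ n) (pow_mem (Subring.subset_closure (Set.mem_singleton _)) k)

theorem isUnit_natCast (hp : p ≠ 0) : IsUnit (p : ZinvP p) :=
  IsUnit.of_mul_eq_one ⟨1 / p, Subring.subset_closure (Set.mem_singleton _)⟩
    (Subtype.ext (by simpa using mul_inv_cancel₀ (Nat.cast_ne_zero.mpr hp : (p : ℚ) ≠ 0)))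

theorem exists_eq_intCast_mul_unit (hp : 1 < p) {x : ZinvP p} (hx : x ≠ 0) :
    ∃ A : ℤ, ¬ (p : ℤ) ∣ A ∧ ∃ ε : (ZinvP p)ˣ, x = A * ε := by
  have hp₀ : p ≠ 0 := by omega
  obtain ⟨n, k, hn⟩ := (mem_iff hp₀).mp x.2
  have hn₀ : n ≠ 0 := by
    rintro rfl
    exact hx (Subtype.ext (by simpa using hn))
  obtain ⟨j, A, rfl, hpA⟩ : ∃ j A, n = (p : ℤ) ^ j * A ∧ ¬ (p : ℤ) ∣ A :=
    ⟨_, (Int.finiteMultiplicity_iff.mpr ⟨by rw [Int.natAbs_natCast]; omega, hn₀⟩).exists_eq_pow_mul_and_not_dvd⟩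
  set π := (isUnit_natCast hp₀).unit
  refine ⟨A, hpA, π ^ j * (π ^ k)⁻¹, ?_⟩
  rw [Units.val_mul, ← mul_assoc, Units.eq_mul_inv_iff_mul_eq]
  apply Subtype.ext
  have hp' : (p : ℚ) ^ k ≠ 0 := pow_ne_zero _ (by exact_mod_cast hp₀)
  simp only [π, Subring.coe_mul, Subring.coe_pow, Subring.coe_intCast, Units.val_pow_eq_pow_val,
    IsUnit.unit_spec, Subring.coe_natCast, hn]
  field_simp
  push_cast
  ring

theorem isUnit_of_isUnit_intCast (hp : p.Prime) {N : ℤ} (hN : ¬ (p : ℤ) ∣ N)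
    (h : IsUnit (N : ZinvP p)) : IsUnit N := by
  obtain ⟨y, hy⟩ := h.exists_right_inv
  obtain ⟨n, k, hn⟩ := (mem_iff hp.ne_zero).mp y.2
  have hNn : N * n = (p : ℤ) ^ k := by
    have hp' : (p : ℚ) ^ k ≠ 0 := pow_ne_zero _ (by exact_mod_cast hp.ne_zero)
    have := congrArg Subtype.val hy
    rw [Subring.coe_mul, Subring.coe_intCast, hn, OneMemClass.coe_one, mul_div_assoc',
      div_eq_one_iff_eq hp'] at this
    exact_mod_cast this
  have hNp : IsCoprime N ((p : ℤ) ^ k) :=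
    ((Nat.prime_iff_prime_int.mp hp).coprime_iff_not_dvd.mpr hN).symm.pow_right
  exact hNp.isUnit_of_dvd ⟨n, hNn.symm⟩

theorem isCoprime_of_isCoprime_intCast (hp : p.Prime) {A C : ℤ} (hA : ¬ (p : ℤ) ∣ A)
    (h : IsCoprime (A : ZinvP p) (C : ZinvP p)) : IsCoprime A C := by
  rw [Int.isCoprime_iff_gcd_eq_one, ← Int.natAbs_natCast (A.gcd C), ← Int.isUnit_iff_natAbs_eq]
  refine isUnit_of_isUnit_intCast hp (fun h => hA (h.trans (Int.gcd_dvd_left A C))) ?_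
  exact h.isUnit_of_dvd' (Int.cast_dvd_cast _ _ (Int.gcd_dvd_left A C))
    (Int.cast_dvd_cast _ _ (Int.gcd_dvd_right A C))

theorem columnReducible (hp : p.Prime) (hArtin : ArtinInProgressions p) {m : ℕ}
    (hmp : m.Coprime p) {a c : ZinvP p} (hac : IsCoprime a c)
    (ha : a - 1 ∈ Ideal.span {(m : ZinvP p)}) (hc : c ∈ Ideal.span {(m : ZinvP p)}) :
    ColumnReducible (Ideal.span {(m : ZinvP p)}) ![a, c] := by
  obtain ⟨t₀, ha₀⟩ : ∃ t₀ : ZinvP p, a + t₀ * c ≠ 0 := by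
    by_cases ha₀ : a = 0
    · refine ⟨1, ?_⟩
      rw [ha₀, zero_add, one_mul]
      exact (isCoprime_zero_left.mp (ha₀ ▸ hac)).ne_zero
    · exact ⟨0, by simpa using ha₀⟩
  refine ColumnReducible.of_transvection_mulVec (t := t₀) ?_
  rw [transvection_zero_one_mulVec]
  have hac₀ : IsCoprime (a + t₀ * c) c := hac.add_mul_right_left t₀
  have ha₁ : a + t₀ * c - 1 ∈ Ideal.span {(m : ZinvP p)} := by
    rw [add_sub_right_comm]
    exact add_mem ha (Ideal.mul_mem_left _ _ hc)
  obtain ⟨A, hpA, ε, hA⟩ := exists_eq_intCast_mul_unit hp.one_lt ha₀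
  obtain ⟨c', rfl⟩ := Ideal.mem_span_singleton.mp hc
  obtain ⟨C, δ, rfl⟩ : ∃ (C : ℤ) (δ : (ZinvP p)ˣ), c' = C * δ := by
    rcases eq_or_ne c' 0 with rfl | hc'
    · exact ⟨0, 1, by simp⟩
    · obtain ⟨C, -, δ, hC⟩ := exists_eq_intCast_mul_unit hp.one_lt hc'
      exact ⟨C, δ, hC⟩
  rw [hA] at ha₀ ha₁ hac₀ ⊢
  rw [← mul_assoc]
  have hAC : IsCoprime A C := isCoprime_of_isCoprime_intCast hp hpA
    hac₀.of_mul_left_left.of_mul_right_right.of_mul_right_left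
  have hAm : IsCoprime A m := by
    refine isCoprime_of_isCoprime_intCast hp hpA (.of_mul_left_left (y := (ε : ZinvP p)) ?_)
    obtain ⟨y, hy⟩ := Ideal.mem_span_singleton.mp ha₁
    exact ⟨1, -y, by push_cast; linear_combination hy⟩
  obtain ⟨q₁, q₂, W, h₁, h₂, h₃⟩ :=
    hArtin.exists_dvd_chain hp hmp (by rintro rfl; simp at ha₀) hpA hAC hAm
  replace h₁ := Int.cast_dvd_cast (α := ZinvP p) _ _ h₁
  replace h₂ := Int.cast_dvd_cast (α := ZinvP p) _ _ h₂
  replace h₃ := Int.cast_dvd_cast (α := ZinvP p) _ _ h₃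
  push_cast at h₁ h₂ h₃
  exact columnReducible_of_dvd_chain ε δ ((isUnit_natCast hp.ne_zero).pow W) ha₁ h₁ h₂ h₃

end ZinvP

theorem width_SL2_Zp_general (p : ℕ) (hp : p.Prime) (m : ℕ) (hmp : Nat.Coprime m p)
    (GRH : ∀ c d : ℤ, IsCoprime c d → ¬ ((p : ℤ) ∣ d) →
      { q : ℕ | q.Prime ∧ (q : ℤ) ≡ c [ZMOD d] ∧
        orderOf ((p : ZMod q)) = q - 1 }.Infinite)
    (g : Matrix (Fin 2) (Fin 2) (ZinvP p)) (hdet : g.det = 1)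
    (hg : ∀ i j, g i j - (1 : Matrix (Fin 2) (Fin 2) (ZinvP p)) i j ∈
      Ideal.span {((m : ZinvP p))}) :
    ∃ L : List (Matrix (Fin 2) (Fin 2) (ZinvP p)),
      L.length ≤ 6 ∧
      (∀ x ∈ L,
        (∃ s ∈ Ideal.span {((m : ZinvP p))}, x = 1 + Matrix.single 0 1 s) ∨
        (∃ s ∈ Ideal.span {((m : ZinvP p))}, x = 1 + Matrix.single 1 0 s) ∨
        (∃ s ∈ Ideal.span {((m : ZinvP p))}, ∃ ξ : ZinvP p,
          x = (1 + Matrix.single 0 1 ξ)⁻¹ *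
                (1 + Matrix.single 1 0 s) *
                (1 + Matrix.single 0 1 ξ))) ∧
      g = L.prod := by
  have hcop : IsCoprime (g 0 0) (g 1 0) :=
    ⟨g 1 1, -g 0 1, by rw [det_fin_two] at hdet; linear_combination hdet⟩
  have ha : g 0 0 - 1 ∈ Ideal.span {(m : ZinvP p)} := by simpa using hg 0 0
  have hc : g 1 0 ∈ Ideal.span {(m : ZinvP p)} := by simpa using hg 1 0
  obtain ⟨L, hL, hLgen, rfl⟩ := exists_list_isTitsGenerator_of_columnReducible hdet hg
    (ZinvP.columnReducible hp GRH hmp hcop ha hc)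
  exact ⟨L, hL.le.trans (by norm_num), hLgen, rfl⟩

/-- Width of `SL(2, ℤ[1/p], I)` with respect to the Tits generators `Z({−α₁})`,
conditionally on GRH (formulated via primes in arithmetic progressions admitting `p`
as a primitive root). -/
theorem width_SL2_Zp (p : ℕ) (hp : p.Prime) (m : ℕ) (hm : 0 < m) (hmp : Nat.Coprime m p)
    (GRH : ∀ c d : ℤ, IsCoprime c d → ¬ ((p : ℤ) ∣ d) →
      { q : ℕ | q.Prime ∧ (q : ℤ) ≡ c [ZMOD d] ∧
        orderOf ((p : ZMod q)) = q - 1 }.Infinite)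
    (g : Matrix (Fin 2) (Fin 2) (ZinvP p)) (hdet : g.det = 1)
    (hg : ∀ i j, g i j - (1 : Matrix (Fin 2) (Fin 2) (ZinvP p)) i j ∈
      Ideal.span {((m : ZinvP p))}) :
    ∃ L : List (Matrix (Fin 2) (Fin 2) (ZinvP p)),
      L.length ≤ 6 ∧
      (∀ x ∈ L,
        (∃ s ∈ Ideal.span {((m : ZinvP p))}, x = 1 + Matrix.single 0 1 s) ∨
        (∃ s ∈ Ideal.span {((m : ZinvP p))}, x = 1 + Matrix.single 1 0 s) ∨
        (∃ s ∈ Ideal.span {((m : ZinvP p))}, ∃ ξ : ZinvP p,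
          x = (1 + Matrix.single 0 1 ξ)⁻¹ *
                (1 + Matrix.single 1 0 s) *
                (1 + Matrix.single 0 1 ξ))) ∧
      g = L.prod :=
  width_SL2_Zp_general p hp m hmp GRH g hdet hg
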